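/- Let m and k be positive integers with m ≠ k, let p(y) = √(k² + (m² − k²)cos²y), and define F : (−π/2, π/2) → ℝ by F(y) = cos y · ∫₀^y dξ / (cos²ξ · √(k² + (m² − k²)cos²ξ)). Then F satisfies the Sturm–Liouville equation −(1/p(y))(p(y)F'(y))' + (m²/p(y)² − 2)F(y) = 0 on (−π/2, π/2), and its Wronskian with cos y satisfies p(y)·(cos y · F'(y) + sin y · F(y)) = 1 for all y ∈ (−π/2, π/2); in particular F and cos y are linearly independent solutions on this interval. -/

import Mathlib

/-!
Reduction of order: if `u` solves `(p u')' = r u` and `w' = 1 / (u² p)`, then `v = u w` solves the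
same equation, because `p v' = (p u') w + 1 / u` and the derivative of the last term cancels
`(p u') w'`; moreover the Wronskian `p (u v' - u' v) = p u² w'` is identically `1`.
For `p(y) = √(k² + (m² - k²) cos² y)` the function `u = cos` solves the equation with
`r = m² / p - 2 p`, which is the Sturm–Liouville equation with `l = m` and `λ = 2`, and it does
not vanish on `(-π/2, π/2)`.
-/

open Real Set

theorem HasDerivAt.intervalIntegral_of_continuousOn {g : ℝ → ℝ} {s : Set ℝ} {c z : ℝ}
    (hs : IsOpen s) (hs' : s.OrdConnected) (hg : ContinuousOn g s) (hc : c ∈ s) (hz : z ∈ s) :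
    HasDerivAt (fun y => ∫ t in c..y, g t) (g z) z :=
  intervalIntegral.integral_hasDerivAt_right
    ((hg.mono (hs'.uIcc_subset hc hz)).intervalIntegrable)
    (hg.stronglyMeasurableAtFilter hs z hz) (hg.continuousAt (hs.mem_nhds hz))

section ReductionOfOrder

variable {p u u' w r : ℝ → ℝ} {z : ℝ}

theorem wronskian_reductionOfOrder_eq_one (hu : HasDerivAt u (u' z) z)
    (hw : HasDerivAt w (1 / (u z ^ 2 * p z)) z) (hu0 : u z ≠ 0) (hp0 : p z ≠ 0) :
    p z * (u z * deriv (fun y => u y * w y) z - u' z * (u z * w z)) = 1 := by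
  rw [(hu.fun_mul hw).deriv]
  field_simp
  ring

theorem hasDerivAt_weight_mul_deriv_reductionOfOrder {s : Set ℝ} (hs : IsOpen s)
    (hu : ∀ y ∈ s, HasDerivAt u (u' y) y)
    (hpu : HasDerivAt (fun y => p y * u' y) (r z * u z) z)
    (hw : ∀ y ∈ s, HasDerivAt w (1 / (u y ^ 2 * p y)) y)
    (hu0 : ∀ y ∈ s, u y ≠ 0) (hp0 : ∀ y ∈ s, p y ≠ 0) (hz : z ∈ s) :
    HasDerivAt (fun y => p y * deriv (fun y => u y * w y) y) (r z * (u z * w z)) z := by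
  have hpv : (fun y => p y * deriv (fun y => u y * w y) y) =ᶠ[nhds z]
      fun y => p y * u' y * w y + (u y)⁻¹ := by
    filter_upwards [hs.mem_nhds hz] with y hy
    rw [((hu y hy).fun_mul (hw y hy)).deriv]
    field_simp [hu0 y hy, hp0 y hy]
  refine (((hpu.fun_mul (hw z hz)).add ((hu z hz).inv (hu0 z hz))).congr_of_eventuallyEq hpv)
    |>.congr_deriv ?_
  field_simp [hu0 z hz, hp0 z hz]
  ring

end ReductionOfOrder

section LawsonWeight

variable {m k : ℝ}

/-- The weight `p` of the Sturm–Liouville equation of `τ_{m,k}`. -/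
noncomputable def lawsonWeight (m k y : ℝ) : ℝ :=
  √(k ^ 2 + (m ^ 2 - k ^ 2) * cos y ^ 2)

theorem lawsonWeight_radicand_pos (hm : m ≠ 0) (hk : k ≠ 0) (y : ℝ) :
    0 < k ^ 2 + (m ^ 2 - k ^ 2) * cos y ^ 2 := by
  have h : k ^ 2 + (m ^ 2 - k ^ 2) * cos y ^ 2 = k ^ 2 * sin y ^ 2 + m ^ 2 * cos y ^ 2 := by
    linear_combination (-k ^ 2) * sin_sq_add_cos_sq y
  rw [h]
  rcases eq_or_ne (cos y) 0 with hc | hc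
  · have hs : sin y ^ 2 = 1 := by simpa [hc] using sin_sq_add_cos_sq y
    rw [hc, hs]
    positivity
  · positivity

theorem lawsonWeight_pos (hm : m ≠ 0) (hk : k ≠ 0) (y : ℝ) : 0 < lawsonWeight m k y :=
  sqrt_pos.mpr (lawsonWeight_radicand_pos hm hk y)

theorem lawsonWeight_sq (hm : m ≠ 0) (hk : k ≠ 0) (y : ℝ) :
    lawsonWeight m k y ^ 2 = k ^ 2 + (m ^ 2 - k ^ 2) * cos y ^ 2 :=
  sq_sqrt (lawsonWeight_radicand_pos hm hk y).le

theorem continuous_lawsonWeight : Continuous (lawsonWeight m k) := by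
  unfold lawsonWeight
  fun_prop

theorem hasDerivAt_lawsonWeight (hm : m ≠ 0) (hk : k ≠ 0) (y : ℝ) :
    HasDerivAt (lawsonWeight m k) (-(m ^ 2 - k ^ 2) * sin y * cos y / lawsonWeight m k y) y := by
  have h := ((((hasDerivAt_cos y).fun_pow 2).const_mul (m ^ 2 - k ^ 2)).const_add (k ^ 2)).sqrt
    (lawsonWeight_radicand_pos hm hk y).ne'
  have hp := (lawsonWeight_pos hm hk y).ne'
  refine h.congr_deriv ?_
  rw [lawsonWeight] at hp ⊢
  field_simp
  ring

theorem hasDerivAt_lawsonWeight_mul_neg_sin (hm : m ≠ 0) (hk : k ≠ 0) (y : ℝ) :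
    HasDerivAt (fun y => lawsonWeight m k y * -sin y)
      ((m ^ 2 / lawsonWeight m k y - 2 * lawsonWeight m k y) * cos y) y := by
  refine ((hasDerivAt_lawsonWeight hm hk y).fun_mul (hasDerivAt_sin y).fun_neg).congr_deriv ?_
  have hp := (lawsonWeight_pos hm hk y).ne'
  field_simp
  linear_combination cos y * lawsonWeight_sq hm hk y
    + (m ^ 2 - k ^ 2) * cos y * sin_sq_add_cos_sq y

theorem continuousOn_one_div_cos_sq_mul_lawsonWeight (hm : m ≠ 0) (hk : k ≠ 0) :
    ContinuousOn (fun y => 1 / (cos y ^ 2 * lawsonWeight m k y)) (Ioo (-(π / 2)) (π / 2)) :=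
  continuousOn_const.div ((continuous_cos.pow 2).mul continuous_lawsonWeight).continuousOn
    fun y hy => (mul_pos (pow_pos (cos_pos_of_mem_Ioo hy) 2) (lawsonWeight_pos hm hk y)).ne'

end LawsonWeight

theorem second_solution_F_general (m k : ℕ) (hm : 0 < m) (hk : 0 < k)
    (p : ℝ → ℝ)
    (hp : ∀ y : ℝ, p y = Real.sqrt ((k : ℝ) ^ 2 + ((m : ℝ) ^ 2 - (k : ℝ) ^ 2) * Real.cos y ^ 2))
    (F : ℝ → ℝ)
    (hF : ∀ y : ℝ, F y = Real.cos y *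
      ∫ ξ in (0 : ℝ)..y, 1 / (Real.cos ξ ^ 2 *
        Real.sqrt ((k : ℝ) ^ 2 + ((m : ℝ) ^ 2 - (k : ℝ) ^ 2) * Real.cos ξ ^ 2))) :
    ∀ y ∈ Set.Ioo (-(π / 2)) (π / 2),
      (-(1 / p y) * deriv (fun y' => p y' * deriv F y') y
        + ((m : ℝ) ^ 2 / (p y) ^ 2 - 2) * F y = 0) ∧
      p y * (Real.cos y * deriv F y + Real.sin y * F y) = 1 := by
  have hm0 : (m : ℝ) ≠ 0 := by positivity
  have hk0 : (k : ℝ) ≠ 0 := by positivity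
  obtain rfl : p = lawsonWeight m k := funext hp
  obtain rfl :
      F = fun y => cos y * ∫ ξ in (0 : ℝ)..y, 1 / (cos ξ ^ 2 * lawsonWeight m k ξ) := funext hF
  set s := Ioo (-(π / 2)) (π / 2)
  have h0 : (0 : ℝ) ∈ s := ⟨by linarith [pi_pos], by linarith [pi_pos]⟩
  have hw y (hy : y ∈ s) := HasDerivAt.intervalIntegral_of_continuousOn isOpen_Ioo
    ordConnected_Ioo (continuousOn_one_div_cos_sq_mul_lawsonWeight hm0 hk0) h0 hy
  have hcos y (hy : y ∈ s) : cos y ≠ 0 := (cos_pos_of_mem_Ioo hy).ne'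
  have hp0 y (_ : y ∈ s) : lawsonWeight m k y ≠ 0 := (lawsonWeight_pos hm0 hk0 y).ne'
  intro y hy
  constructor
  · rw [(hasDerivAt_weight_mul_deriv_reductionOfOrder (u' := fun y => -sin y)
      (r := fun y => m ^ 2 / lawsonWeight m k y - 2 * lawsonWeight m k y) isOpen_Ioo
      (fun y _ => hasDerivAt_cos y) (hasDerivAt_lawsonWeight_mul_neg_sin hm0 hk0 y) hw hcos hp0
      hy).deriv]
    field_simp [hp0 y hy]
    ring
  · linear_combination wronskian_reductionOfOrder_eq_one (u' := fun y => -sin y)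
      (hasDerivAt_cos y) (hw y hy) (hcos y hy) (hp0 y hy)

/-- The function `F(y) = cos y · ∫₀^y dξ/(cos²ξ √(k² + (m² − k²)cos²ξ))` is a second solution
of the Sturm–Liouville equation with `l = m`, `λ = 2` on `(−π/2, π/2)`, and its Wronskian with
`cos y` satisfies `p·(cos y · F' + sin y · F) = 1`; in particular `F` and `cos` are linearly
independent solutions on this interval. -/
theorem second_solution_F (m k : ℕ) (hm : 0 < m) (hk : 0 < k) (hmk : m ≠ k)
    (p : ℝ → ℝ)
    (hp : ∀ y : ℝ, p y = Real.sqrt ((k : ℝ) ^ 2 + ((m : ℝ) ^ 2 - (k : ℝ) ^ 2) * Real.cos y ^ 2))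
    (F : ℝ → ℝ)
    (hF : ∀ y : ℝ, F y = Real.cos y *
      ∫ ξ in (0 : ℝ)..y, 1 / (Real.cos ξ ^ 2 *
        Real.sqrt ((k : ℝ) ^ 2 + ((m : ℝ) ^ 2 - (k : ℝ) ^ 2) * Real.cos ξ ^ 2))) :
    ∀ y ∈ Set.Ioo (-(π / 2)) (π / 2),
      (-(1 / p y) * deriv (fun y' => p y' * deriv F y') y
        + ((m : ℝ) ^ 2 / (p y) ^ 2 - 2) * F y = 0) ∧
      p y * (Real.cos y * deriv F y + Real.sin y * F y) = 1 :=
  second_solution_F_general m k hm hk p hp F hF
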